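/- Let n ≥ 2, let r : ZMod n → [0,∞) satisfy L := 1 − 2∑_i r_i > 0, let q : ZMod n → (0,1] satisfy ∑_i q_i = 1, and let P_1, …, P_n be Borel probability measures on [0,∞) such that for every pair of distinct indices i ≠ j, the product measure P_i × P_j gives positive mass to {(a,b) : a > b}. Define the random sequential updating gap kernel κ on X_L by κ(Δ) := ∑_j q_j · (pushforward of P_j under v ↦ F_{v,j}(Δ)), where F_{v,j} changes only the coordinates j−1 and j of Δ by F_{v,j}(Δ)_{j−1} = Δ_{j−1} + min{v, Δ_j} and F_{v,j}(Δ)_j = Δ_j − min{v, Δ_j}. Then κ has exactly one invariant probability measure. -/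

import Mathlib

/-!
Some power `κ ^ m` of the gap kernel satisfies Doeblin's condition on `X_L`. Every `P j` charges
some `[β, ∞)`; if particles `n - 1, n - 2, …, 1` in turn each make `N ≥ L / β` jumps of length at
least `β`, every gap but gap `0` is emptied, whatever the starting configuration. Hence
`κ ^ m (Δ, ·) ≥ c ^ m δ_{L e₀}` on `X_L` with `m = (n - 1) N`.

Doeblin's condition forces uniqueness: the common part `ρ = μ₁ ⊓ μ₂` of two distinct invariant
laws would dominate `κ ^ m ∘ ρ` plus a positive multiple of `δ_{L e₀}`, which has more mass than
`ρ`. It also gives a `κ ^ m`-invariant law, the normalized series `∑ₖ Rᵏ δ_{L e₀}` where `R`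
removes the minorizing part after each `m` steps. If `π` is the unique `κ ^ m`-invariant law, so
is `κ ∘ π`, hence `κ ∘ π = π`.
-/

open MeasureTheory

/-- The sequential update of the gap process at index `j` with jump length `v`:
only coordinates `j - 1` and `j` change. -/
noncomputable def seqGapUpdate (n : ℕ) (j : ZMod n) (v : ℝ) (Δ : ZMod n → ℝ) :
    ZMod n → ℝ :=
  fun k =>
    if k = j - 1 then Δ (j - 1) + min v (Δ j)
    else if k = j then Δ j - min v (Δ j)
    else Δ k

open ProbabilityTheory Set Filter
open scoped ENNReal

namespace MeasureTheory.Measure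

variable {α : Type*} [MeasurableSpace α]

lemma smul_dirac_le {μ : Measure α} {ε : ℝ≥0∞} {x : α} (h : ε ≤ μ {x}) : ε • dirac x ≤ μ := by
  refine le_iff.2 fun A hA => ?_
  rw [smul_apply, dirac_apply' _ hA, smul_eq_mul]
  by_cases hx : x ∈ A
  · simpa [hx] using h.trans (measure_mono (singleton_subset_iff.2 hx))
  · simp [hx]

end MeasureTheory.Measure

namespace ProbabilityTheory.Kernel

variable {α : Type*} [MeasurableSpace α] {κ η : Kernel α α} {X : Set α}

instance _root_.ProbabilityTheory.IsMarkovKernel.pow [IsMarkovKernel κ] (m : ℕ) :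
    IsMarkovKernel (κ ^ m) := by
  induction m with
  | zero => exact inferInstanceAs (IsMarkovKernel Kernel.id)
  | succ m ih => rw [pow_succ]; exact IsMarkovKernel.comp _ _

lemma Invariant.pow {μ : Measure α} (h : κ.Invariant μ) (m : ℕ) : (κ ^ m).Invariant μ := by
  induction m with
  | zero => exact Measure.bind_dirac
  | succ m ih => rw [pow_succ]; exact ih.comp h

lemma pow_apply_singleton_mul_le [MeasurableSingletonClass α] (κ : Kernel α α) (a b : ℕ)
    (x y : α) {s : Set α} (hs : MeasurableSet s) :
    (κ ^ a) x {y} * (κ ^ b) y s ≤ (κ ^ (a + b)) x s := by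
  rw [pow_add_apply_eq_lintegral _ _ _ _ hs, mul_comm,
    ← lintegral_singleton (fun z => (κ ^ b) z s) y]
  exact setLIntegral_le_lintegral _ _

lemma comp_apply_compl_eq_zero (hX : MeasurableSet X) (habs : ∀ a ∈ X, κ a Xᶜ = 0)
    {μ : Measure α} (hμ : μ Xᶜ = 0) : (κ ∘ₘ μ) Xᶜ = 0 := by
  have hae : (fun a => κ a Xᶜ) =ᵐ[μ] 0 :=
    measure_mono_null (fun a ha haX => ha (habs a haX)) hμ
  rw [Measure.bind_apply hX.compl κ.aemeasurable, lintegral_congr_ae hae]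
  simp

lemma pow_apply_compl_eq_zero (hX : MeasurableSet X) (habs : ∀ a ∈ X, κ a Xᶜ = 0) (m : ℕ) :
    ∀ a ∈ X, (κ ^ m) a Xᶜ = 0 := by
  induction m with
  | zero =>
    intro a ha
    change Kernel.id a Xᶜ = 0
    rw [Kernel.id_apply, Measure.dirac_apply' _ hX.compl]
    simp [ha]
  | succ m ih =>
    intro a ha
    rw [pow_succ']
    exact comp_apply_compl_eq_zero hX habs (ih a ha)

section Doeblin

variable {ν : Measure α} {ε : ℝ≥0∞}

lemma smul_le_comp_of_forall_smul_le (hmin : ∀ a ∈ X, ε • ν ≤ η a) {ξ : Measure α}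
    (hξ : ξ Xᶜ = 0) : (ε * ξ univ) • ν ≤ η ∘ₘ ξ := by
  refine Measure.le_iff.2 fun A hA => ?_
  have hle : ∀ᵐ a ∂ξ, ε * ν A ≤ η a A :=
    measure_mono_null (fun a ha haX => ha (Measure.le_iff'.1 (hmin a haX) A)) hξ
  calc ((ε * ξ univ) • ν) A = ∫⁻ _, ε * ν A ∂ξ := by
        rw [MeasureTheory.lintegral_const, Measure.smul_apply, smul_eq_mul]; ring
    _ ≤ ∫⁻ a, η a A ∂ξ := lintegral_mono_ae hle
    _ = (η ∘ₘ ξ) A := (Measure.bind_apply hA η.aemeasurable).symm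

lemma comp_add_smul_le_of_le [IsMarkovKernel η] (hmin : ∀ a ∈ X, ε • ν ≤ η a)
    {μ ρ : Measure α} [IsProbabilityMeasure μ] [IsFiniteMeasure ρ] (hμX : μ Xᶜ = 0)
    (hμ : η.Invariant μ) (hρμ : ρ ≤ μ) : η ∘ₘ ρ + (ε * (1 - ρ univ)) • ν ≤ μ := by
  have hrest : (μ - ρ) univ = 1 - ρ univ := by
    rw [Measure.sub_apply .univ hρμ, measure_univ]
  have hrestX : (μ - ρ) Xᶜ = 0 := Measure.absolutelyContinuous_of_le Measure.sub_le hμX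
  calc η ∘ₘ ρ + (ε * (1 - ρ univ)) • ν ≤ η ∘ₘ ρ + η ∘ₘ (μ - ρ) := by
        rw [← hrest]; exact add_le_add_right (smul_le_comp_of_forall_smul_le hmin hrestX) _
    _ = η ∘ₘ μ := by rw [← Measure.comp_add, add_comm, Measure.sub_add_cancel_of_le hρμ]
    _ = μ := hμ

lemma eq_of_invariant_of_forall_smul_le [IsMarkovKernel η] [IsProbabilityMeasure ν] (hε : 0 < ε)
    (hmin : ∀ a ∈ X, ε • ν ≤ η a) {μ₁ μ₂ : Measure α} [IsProbabilityMeasure μ₁]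
    [IsProbabilityMeasure μ₂] (h₁X : μ₁ Xᶜ = 0) (h₂X : μ₂ Xᶜ = 0) (h₁ : η.Invariant μ₁)
    (h₂ : η.Invariant μ₂) : μ₁ = μ₂ := by
  have : IsFiniteMeasure (μ₁ ⊓ μ₂) := isFiniteMeasure_of_le μ₁ inf_le_left
  by_cases hρ : (μ₁ ⊓ μ₂) univ = 1
  · rw [← Measure.eq_of_le_of_measure_univ_eq inf_le_left (hρ.trans measure_univ.symm),
      Measure.eq_of_le_of_measure_univ_eq inf_le_right (hρ.trans measure_univ.symm)]
  have hle := Measure.le_iff'.1 (le_inf (comp_add_smul_le_of_le hmin h₁X h₁ inf_le_left)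
    (comp_add_smul_le_of_le hmin h₂X h₂ inf_le_right)) univ
  rw [Measure.add_apply, Measure.comp_apply_univ, Measure.smul_apply, smul_eq_mul,
    measure_univ (μ := ν), mul_one] at hle
  refine absurd hle (ENNReal.lt_add_right (measure_ne_top _ univ) ?_).not_ge
  have hρ1 : (μ₁ ⊓ μ₂) univ < 1 :=
    lt_of_le_of_ne ((Measure.le_iff'.1 inf_le_left univ).trans_eq measure_univ) hρ
  exact mul_ne_zero hε.ne' (tsub_pos_of_lt hρ1).ne'

noncomputable def residual (η : Kernel α α) (ε : ℝ≥0∞) (ν ξ : Measure α) : Measure α :=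
  η ∘ₘ ξ - (ε * ξ univ) • ν

lemma residual_add_smul (hmin : ∀ a ∈ X, ε • ν ≤ η a) [IsFiniteMeasure ν] (hε : ε ≠ ∞)
    {ξ : Measure α} [IsFiniteMeasure ξ] (hξ : ξ Xᶜ = 0) :
    residual η ε ν ξ + (ε * ξ univ) • ν = η ∘ₘ ξ :=
  have := ν.smul_finite (ENNReal.mul_ne_top hε (measure_ne_top ξ univ))
  Measure.sub_add_cancel_of_le (smul_le_comp_of_forall_smul_le hmin hξ)

lemma residual_apply_compl_eq_zero (hX : MeasurableSet X) (habs : ∀ a ∈ X, η a Xᶜ = 0)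
    {ξ : Measure α} (hξ : ξ Xᶜ = 0) : residual η ε ν ξ Xᶜ = 0 :=
  Measure.absolutelyContinuous_of_le Measure.sub_le (comp_apply_compl_eq_zero hX habs hξ)

lemma residual_apply_univ [IsMarkovKernel η] (hmin : ∀ a ∈ X, ε • ν ≤ η a)
    [IsProbabilityMeasure ν] (hε : ε ≠ ∞) {ξ : Measure α} [IsFiniteMeasure ξ]
    (hξ : ξ Xᶜ = 0) : residual η ε ν ξ univ = (1 - ε) * ξ univ := by
  have := congrArg (· univ) (residual_add_smul hmin hε hξ)
  simp only [Measure.add_apply, Measure.smul_apply, measure_univ, smul_eq_mul, mul_one,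
    Measure.comp_apply_univ] at this
  rw [ENNReal.sub_mul fun _ _ => measure_ne_top ξ univ, one_mul]
  exact ENNReal.eq_sub_of_add_eq (ENNReal.mul_ne_top hε (measure_ne_top ξ univ)) this

lemma residual_iterate [IsMarkovKernel η] (hX : MeasurableSet X) (habs : ∀ a ∈ X, η a Xᶜ = 0)
    (hmin : ∀ a ∈ X, ε • ν ≤ η a) [IsProbabilityMeasure ν] (hν : ν Xᶜ = 0) (hε : ε ≠ ∞)
    (k : ℕ) : (residual η ε ν)^[k] ν Xᶜ = 0 ∧ (residual η ε ν)^[k] ν univ = (1 - ε) ^ k := by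
  induction k with
  | zero => simpa using hν
  | succ k ih =>
    have : IsFiniteMeasure ((residual η ε ν)^[k] ν) :=
      ⟨by rw [ih.2]; exact ENNReal.pow_lt_top (tsub_le_self.trans_lt ENNReal.one_lt_top)⟩
    rw [Function.iterate_succ_apply', residual_apply_univ hmin hε ih.1, ih.2, pow_succ']
    exact ⟨residual_apply_compl_eq_zero hX habs ih.1, rfl⟩

lemma comp_residual_iterate [IsMarkovKernel η] (hX : MeasurableSet X)
    (habs : ∀ a ∈ X, η a Xᶜ = 0) (hmin : ∀ a ∈ X, ε • ν ≤ η a) [IsProbabilityMeasure ν]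
    (hν : ν Xᶜ = 0) (hε : ε ≠ ∞) (k : ℕ) :
    η ∘ₘ (residual η ε ν)^[k] ν = (residual η ε ν)^[k + 1] ν + (ε * (1 - ε) ^ k) • ν := by
  obtain ⟨hkX, hkuniv⟩ := residual_iterate hX habs hmin hν hε k
  have : IsFiniteMeasure ((residual η ε ν)^[k] ν) :=
    ⟨by rw [hkuniv]; exact ENNReal.pow_lt_top (tsub_le_self.trans_lt ENNReal.one_lt_top)⟩
  rw [← residual_add_smul hmin hε hkX, hkuniv, Function.iterate_succ_apply']

lemma sum_residual_iterate_apply_univ [IsMarkovKernel η] (hX : MeasurableSet X)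
    (habs : ∀ a ∈ X, η a Xᶜ = 0) (hmin : ∀ a ∈ X, ε • ν ≤ η a) [IsProbabilityMeasure ν]
    (hν : ν Xᶜ = 0) (hε : ε ≤ 1) :
    Measure.sum (fun k => (residual η ε ν)^[k] ν) univ = ε⁻¹ := by
  rw [Measure.sum_apply _ .univ]
  simp_rw [(residual_iterate hX habs hmin hν (ne_top_of_le_ne_top ENNReal.one_ne_top hε) _).2]
  rw [ENNReal.tsum_geometric, ENNReal.sub_sub_cancel ENNReal.one_ne_top hε]

/-- The series is invariant because the minorizing parts `ε (1 - ε) ^ k • ν` removed along the way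
add up to `ν`, its first term. -/
lemma comp_sum_residual_iterate [IsMarkovKernel η] (hX : MeasurableSet X)
    (habs : ∀ a ∈ X, η a Xᶜ = 0) (hmin : ∀ a ∈ X, ε • ν ≤ η a) [IsProbabilityMeasure ν]
    (hν : ν Xᶜ = 0) (hε₀ : ε ≠ 0) (hε : ε ≤ 1) :
    η ∘ₘ Measure.sum (fun k => (residual η ε ν)^[k] ν) =
      Measure.sum fun k => (residual η ε ν)^[k] ν := by
  have hεtop : ε ≠ ∞ := ne_top_of_le_ne_top ENNReal.one_ne_top hε
  have hgeom : ∑' k : ℕ, ε * (1 - ε) ^ k = 1 := by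
    rw [ENNReal.tsum_mul_left, ENNReal.tsum_geometric,
      ENNReal.sub_sub_cancel ENNReal.one_ne_top hε, ENNReal.mul_inv_cancel hε₀ hεtop]
  ext A hA
  rw [Measure.bind_sum _ _ η.aemeasurable, Measure.sum_apply _ hA, Measure.sum_apply _ hA]
  simp_rw [comp_residual_iterate hX habs hmin hν hεtop, Measure.add_apply, Measure.smul_apply,
    smul_eq_mul]
  rw [ENNReal.tsum_add, ENNReal.tsum_mul_right, hgeom, one_mul,
    tsum_eq_zero_add' (f := fun k => (residual η ε ν)^[k] ν A) ENNReal.summable]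
  simp [add_comm]

lemma exists_invariant_of_forall_smul_le [IsMarkovKernel η] (hX : MeasurableSet X)
    (habs : ∀ a ∈ X, η a Xᶜ = 0) [IsProbabilityMeasure ν] (hν : ν Xᶜ = 0) (hε : 0 < ε)
    (hmin : ∀ a ∈ X, ε • ν ≤ η a) :
    ∃ μ : Measure α, IsProbabilityMeasure μ ∧ μ Xᶜ = 0 ∧ η.Invariant μ := by
  obtain ⟨a, ha⟩ : X.Nonempty :=
    nonempty_of_measure_ne_zero (μ := ν) (by simp [(prob_compl_eq_zero_iff hX).1 hν])
  have hε1 : ε ≤ 1 := by simpa using Measure.le_iff'.1 (hmin a ha) univ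
  have hεtop : ε ≠ ∞ := ne_top_of_le_ne_top ENNReal.one_ne_top hε1
  refine ⟨ε • Measure.sum fun k => (residual η ε ν)^[k] ν, ⟨?_⟩, ?_, ?_⟩
  · rw [Measure.smul_apply, sum_residual_iterate_apply_univ hX habs hmin hν hε1, smul_eq_mul,
      ENNReal.mul_inv_cancel hε.ne' hεtop]
  · simp [Measure.sum_apply _ hX.compl, fun k => (residual_iterate hX habs hmin hν hεtop k).1]
  · rw [Invariant, Measure.bind_smul, comp_sum_residual_iterate hX habs hmin hν hε.ne' hε1]

end Doeblin

/-- Doeblin's theorem. -/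
theorem existsUnique_invariant_of_forall_smul_le_pow [IsMarkovKernel κ] (hX : MeasurableSet X)
    (habs : ∀ a ∈ X, κ a Xᶜ = 0) {ν : Measure α} [IsProbabilityMeasure ν] (hν : ν Xᶜ = 0)
    {ε : ℝ≥0∞} (hε : 0 < ε) {m : ℕ} (hmin : ∀ a ∈ X, ε • ν ≤ (κ ^ m) a) :
    ∃! μ : Measure α, IsProbabilityMeasure μ ∧ μ X = 1 ∧ κ.Invariant μ := by
  have huniq {μ₁ μ₂ : Measure α} [IsProbabilityMeasure μ₁] [IsProbabilityMeasure μ₂]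
      (h₁X : μ₁ Xᶜ = 0) (h₂X : μ₂ Xᶜ = 0) (h₁ : (κ ^ m).Invariant μ₁)
      (h₂ : (κ ^ m).Invariant μ₂) : μ₁ = μ₂ :=
    eq_of_invariant_of_forall_smul_le hε hmin h₁X h₂X h₁ h₂
  obtain ⟨π, hπ, hπX, hπinv⟩ :=
    exists_invariant_of_forall_smul_le hX (pow_apply_compl_eq_zero hX habs m) hν hε hmin
  have hκπ : κ.Invariant π := by
    refine huniq (comp_apply_compl_eq_zero hX habs hπX) hπX ?_ hπinv
    calc (κ ^ m) ∘ₘ (κ ∘ₘ π) = (κ ^ m * κ) ∘ₘ π := Measure.comp_assoc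
      _ = (κ * κ ^ m) ∘ₘ π := by rw [pow_mul_comm']
      _ = κ ∘ₘ ((κ ^ m) ∘ₘ π) := Measure.comp_assoc.symm
      _ = κ ∘ₘ π := by rw [hπinv.def]
  refine ⟨π, ⟨hπ, (prob_compl_eq_zero_iff hX).1 hπX, hκπ⟩, ?_⟩
  rintro μ ⟨hμ, hμX, hμinv⟩
  exact huniq ((prob_compl_eq_zero_iff hX).2 hμX) hπX (hμinv.pow m) hπinv

end ProbabilityTheory.Kernel

section GapUpdate

variable {n : ℕ}

lemma ZMod.sub_one_ne_self (hn : 2 ≤ n) (j : ZMod n) : j - 1 ≠ j := by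
  have : Fact (1 < n) := ⟨hn⟩
  simp

lemma seqGapUpdate_apply_sub_one (j : ZMod n) (v : ℝ) (Δ : ZMod n → ℝ) :
    seqGapUpdate n j v Δ (j - 1) = Δ (j - 1) + min v (Δ j) := by
  simp [seqGapUpdate]

lemma seqGapUpdate_apply_self (hn : 2 ≤ n) (j : ZMod n) (v : ℝ) (Δ : ZMod n → ℝ) :
    seqGapUpdate n j v Δ j = Δ j - min v (Δ j) := by
  simp [seqGapUpdate, (ZMod.sub_one_ne_self hn j).symm]

lemma seqGapUpdate_apply_of_ne {j k : ZMod n} (h₁ : k ≠ j - 1) (h₂ : k ≠ j) (v : ℝ)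
    (Δ : ZMod n → ℝ) : seqGapUpdate n j v Δ k = Δ k := by
  simp [seqGapUpdate, h₁, h₂]

lemma seqGapUpdate_eq_self {j : ZMod n} {v : ℝ} {Δ : ZMod n → ℝ} (h : min v (Δ j) = 0) :
    seqGapUpdate n j v Δ = Δ := by
  funext k
  unfold seqGapUpdate
  split_ifs <;> simp_all

lemma seqGapUpdate_eq_add_sub (hn : 2 ≤ n) (j : ZMod n) (v : ℝ) (Δ : ZMod n → ℝ) :
    seqGapUpdate n j v Δ =
      Δ + Pi.single (j - 1) (min v (Δ j)) - Pi.single j (min v (Δ j)) := by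
  funext k
  by_cases h₁ : k = j - 1
  · subst h₁; simp [seqGapUpdate, ZMod.sub_one_ne_self hn j]
  by_cases h₂ : k = j
  · subst h₂; simp [seqGapUpdate_apply_self hn, h₁]
  · simp [seqGapUpdate_apply_of_ne h₁ h₂, h₁, h₂]

lemma sum_seqGapUpdate [NeZero n] (hn : 2 ≤ n) (j : ZMod n) (v : ℝ) (Δ : ZMod n → ℝ) :
    ∑ k, seqGapUpdate n j v Δ k = ∑ k, Δ k := by
  simp [seqGapUpdate_eq_add_sub hn, Finset.sum_add_distrib, Finset.sum_sub_distrib]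

lemma seqGapUpdate_nonneg {j : ZMod n} {v : ℝ} {Δ : ZMod n → ℝ} (hΔ : ∀ i, 0 ≤ Δ i)
    (hv : 0 ≤ v) (k : ZMod n) : 0 ≤ seqGapUpdate n j v Δ k := by
  unfold seqGapUpdate
  split_ifs
  · exact add_nonneg (hΔ _) (le_min hv (hΔ j))
  · exact sub_nonneg.2 (min_le_right _ _)
  · exact hΔ k

/-- A jump of the full gap length empties gap `j` into gap `j - 1`; a smaller jump of the same
particle does not change where that leads. -/
lemma seqGapUpdate_self_seqGapUpdate (hn : 2 ≤ n) (j : ZMod n) (v : ℝ) (Δ : ZMod n → ℝ) :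
    seqGapUpdate n j (seqGapUpdate n j v Δ j) (seqGapUpdate n j v Δ) =
      seqGapUpdate n j (Δ j) Δ := by
  funext k
  by_cases h₁ : k = j - 1
  · subst h₁; simp [seqGapUpdate_apply_sub_one, seqGapUpdate_apply_self hn]
  by_cases h₂ : k = j
  · subst h₂; simp [seqGapUpdate_apply_self hn]
  · simp [seqGapUpdate_apply_of_ne h₁ h₂]

lemma measurable_seqGapUpdate (j : ZMod n) :
    Measurable fun p : (ZMod n → ℝ) × ℝ => seqGapUpdate n j p.2 p.1 := by
  refine measurable_pi_lambda _ fun k => ?_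
  have hΔ (i : ZMod n) : Measurable fun p : (ZMod n → ℝ) × ℝ => p.1 i :=
    (measurable_pi_apply i).comp measurable_fst
  unfold seqGapUpdate
  split_ifs
  · exact (hΔ _).add (measurable_snd.min (hΔ j))
  · exact (hΔ j).sub (measurable_snd.min (hΔ j))
  · exact hΔ k

lemma measurable_seqGapUpdate_left (j : ZMod n) (Δ : ZMod n → ℝ) :
    Measurable fun v => seqGapUpdate n j v Δ :=
  (measurable_seqGapUpdate j).comp measurable_prodMk_left

end GapUpdate

section GapKernel

variable {n : ℕ} [NeZero n]

/-- The state space `X_L`. -/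
def gapSimplex (n : ℕ) [NeZero n] (L : ℝ) : Set (ZMod n → ℝ) :=
  {Δ | (∀ i, 0 ≤ Δ i) ∧ ∑ i, Δ i = L}

lemma measurableSet_gapSimplex (L : ℝ) : MeasurableSet (gapSimplex n L) := by
  unfold gapSimplex
  measurability

lemma seqGapUpdate_mem_gapSimplex (hn : 2 ≤ n) {L : ℝ} {Δ : ZMod n → ℝ}
    (hΔ : Δ ∈ gapSimplex n L) (j : ZMod n) {v : ℝ} (hv : 0 ≤ v) :
    seqGapUpdate n j v Δ ∈ gapSimplex n L :=
  ⟨seqGapUpdate_nonneg hΔ.1 hv, (sum_seqGapUpdate hn j v Δ).trans hΔ.2⟩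

lemma eq_single_of_mem_gapSimplex {L : ℝ} {Δ : ZMod n → ℝ} (hΔ : Δ ∈ gapSimplex n L)
    (hzero : ∀ k : ℕ, 0 < k → k < n → Δ k = 0) : Δ = Pi.single 0 L := by
  have hzero' (i : ZMod n) (hi : i ≠ 0) : Δ i = 0 := by
    simpa using hzero i.val (ZMod.val_pos.2 hi) (ZMod.val_lt i)
  funext i
  by_cases hi : i = 0
  · subst hi
    rw [Pi.single_eq_same, ← hΔ.2, Finset.sum_eq_single 0 (fun b _ hb => hzero' b hb) (by simp)]
  · rw [Pi.single_eq_of_ne hi, hzero' i hi]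

variable (n) in
noncomputable def seqGapKernel (q : ZMod n → ℝ) (P : ZMod n → Measure ℝ) [∀ j, SFinite (P j)] :
    Kernel (ZMod n → ℝ) (ZMod n → ℝ) where
  toFun Δ := ∑ j, ENNReal.ofReal (q j) • (P j).map fun v => seqGapUpdate n j v Δ
  measurable' := by
    refine Measure.measurable_of_measurable_coe _ fun A hA => ?_
    simp only [Measure.finsetSum_apply, Measure.smul_apply, smul_eq_mul,
      Measure.map_apply (measurable_seqGapUpdate_left _ _) hA]
    refine Finset.measurable_sum _ fun j _ => Measurable.const_mul ?_ _
    exact measurable_measure_prodMk_left (measurable_seqGapUpdate j hA)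

variable {q : ZMod n → ℝ} {P : ZMod n → Measure ℝ} [∀ j, SFinite (P j)]

lemma seqGapKernel_apply (Δ : ZMod n → ℝ) {A : Set (ZMod n → ℝ)} (hA : MeasurableSet A) :
    seqGapKernel n q P Δ A =
      ∑ j, ENNReal.ofReal (q j) * P j ((fun v => seqGapUpdate n j v Δ) ⁻¹' A) := by
  simp only [seqGapKernel, Kernel.coe_mk, Measure.finsetSum_apply, Measure.smul_apply,
    smul_eq_mul, Measure.map_apply (measurable_seqGapUpdate_left _ _) hA]

lemma seqGapKernel_invariant_iff (μ : Measure (ZMod n → ℝ)) :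
    (seqGapKernel n q P).Invariant μ ↔ ∀ A : Set (ZMod n → ℝ), MeasurableSet A →
      ∫⁻ Δ, ∑ j, ENNReal.ofReal (q j) * P j ((fun v => seqGapUpdate n j v Δ) ⁻¹' A) ∂μ =
        μ A := by
  simp_rw [Kernel.Invariant, Measure.ext_iff]
  refine forall₂_congr fun A hA => ?_
  simp_rw [Measure.bind_apply hA (Kernel.aemeasurable _), seqGapKernel_apply _ hA]

lemma isMarkovKernel_seqGapKernel [∀ j, IsProbabilityMeasure (P j)] (hq : ∀ j, 0 ≤ q j)
    (hqsum : ∑ j, q j = 1) : IsMarkovKernel (seqGapKernel n q P) :=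
  ⟨fun Δ => ⟨by simp [seqGapKernel_apply Δ .univ, ← ENNReal.ofReal_sum_of_nonneg, hq, hqsum]⟩⟩

lemma seqGapKernel_apply_compl_gapSimplex (hn : 2 ≤ n) (hP : ∀ j, P j (Iio 0) = 0) {L : ℝ} :
    ∀ Δ ∈ gapSimplex n L, seqGapKernel n q P Δ (gapSimplex n L)ᶜ = 0 := by
  intro Δ hΔ
  rw [seqGapKernel_apply Δ (measurableSet_gapSimplex L).compl]
  refine Finset.sum_eq_zero fun j _ => ?_
  rw [measure_mono_null (fun v hv => ?_) (hP j), mul_zero]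
  by_contra hv0
  exact hv (seqGapUpdate_mem_gapSimplex hn hΔ j (not_lt.1 hv0))

end GapKernel

section Minorization

variable {n : ℕ} [NeZero n] {q : ZMod n → ℝ} {P : ZMod n → Measure ℝ} [∀ j, SFinite (P j)]

lemma mul_lintegral_le_lintegral_seqGapKernel (j : ZMod n) (Δ : ZMod n → ℝ)
    {g : (ZMod n → ℝ) → ℝ≥0∞} (hg : Measurable g) :
    ENNReal.ofReal (q j) * ∫⁻ v, g (seqGapUpdate n j v Δ) ∂P j ≤
      ∫⁻ Δ', g Δ' ∂seqGapKernel n q P Δ := by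
  have hle : ENNReal.ofReal (q j) • (P j).map (fun v => seqGapUpdate n j v Δ) ≤
      seqGapKernel n q P Δ :=
    Finset.single_le_sum (f := fun j => ENNReal.ofReal (q j) • (P j).map
      fun v => seqGapUpdate n j v Δ) (fun _ _ => Measure.zero_le _) (Finset.mem_univ j)
  calc ENNReal.ofReal (q j) * ∫⁻ v, g (seqGapUpdate n j v Δ) ∂P j
      = ∫⁻ Δ', g Δ' ∂(ENNReal.ofReal (q j) • (P j).map fun v => seqGapUpdate n j v Δ) := by
        rw [lintegral_smul_measure, lintegral_map hg (measurable_seqGapUpdate_left j Δ),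
          smul_eq_mul]
    _ ≤ ∫⁻ Δ', g Δ' ∂seqGapKernel n q P Δ := lintegral_mono' hle le_rfl

lemma mul_le_seqGapKernel_pow_succ_apply {j : ZMod n} {Δ : ZMod n → ℝ} {β : ℝ}
    {c : ℝ≥0∞} {N : ℕ} {s : Set (ZMod n → ℝ)} (hs : MeasurableSet s)
    (h : ∀ v, β ≤ v → c ≤ (seqGapKernel n q P ^ N) (seqGapUpdate n j v Δ) s) :
    ENNReal.ofReal (q j) * P j (Ici β) * c ≤ (seqGapKernel n q P ^ (N + 1)) Δ s := by
  calc ENNReal.ofReal (q j) * P j (Ici β) * c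
      = ENNReal.ofReal (q j) * ∫⁻ _ in Ici β, c ∂P j := by rw [setLIntegral_const]; ring
    _ ≤ ENNReal.ofReal (q j) * ∫⁻ v, (seqGapKernel n q P ^ N) (seqGapUpdate n j v Δ) s ∂P j := by
        refine mul_le_mul_right ?_ _
        exact (setLIntegral_mono' measurableSet_Ici fun v hv => h v hv).trans
          (setLIntegral_le_lintegral _ _)
    _ ≤ ∫⁻ Δ', (seqGapKernel n q P ^ N) Δ' s ∂seqGapKernel n q P Δ :=
        mul_lintegral_le_lintegral_seqGapKernel j Δ (Kernel.measurable_coe _ hs)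
    _ = (seqGapKernel n q P ^ (N + 1)) Δ s := by
        rw [add_comm, Kernel.pow_add_apply_eq_lintegral _ _ _ _ hs, pow_one]

lemma pow_le_seqGapKernel_pow_apply_empty_gap (hn : 2 ≤ n) {j : ZMod n} {β : ℝ} (hβ : 0 < β)
    {c : ℝ≥0∞} (hc : c ≤ ENNReal.ofReal (q j) * P j (Ici β)) (N : ℕ) {Δ : ZMod n → ℝ}
    (hΔ : ∀ i, 0 ≤ Δ i) (hΔj : Δ j ≤ N * β) :
    c ^ N ≤ (seqGapKernel n q P ^ N) Δ {seqGapUpdate n j (Δ j) Δ} := by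
  induction N generalizing Δ with
  | zero =>
    have hj : Δ j = 0 := le_antisymm (by simpa using hΔj) (hΔ j)
    rw [seqGapUpdate_eq_self (by simp [hj]), pow_zero, pow_zero]
    change 1 ≤ Kernel.id Δ {Δ}
    rw [Kernel.id_apply, Measure.dirac_apply_of_mem (mem_singleton Δ)]
  | succ N ih =>
    rw [pow_succ']
    refine (mul_le_mul_left hc _).trans
      (mul_le_seqGapKernel_pow_succ_apply (measurableSet_singleton _) fun v hv => ?_)
    rw [← seqGapUpdate_self_seqGapUpdate hn j v Δ]
    refine ih (seqGapUpdate_nonneg hΔ (hβ.le.trans hv)) ?_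
    rw [seqGapUpdate_apply_self hn]
    push_cast at hΔj
    rcases min_cases v (Δ j) with ⟨hmin, -⟩ | ⟨hmin, -⟩ <;> rw [hmin]
    · linarith
    · rw [sub_self]
      positivity

/-- Emptying the gaps `t, t - 1, …, 1` in turn, each by `N` jumps of length at least `β`, moves
all the free length into gap `0`. -/
lemma pow_le_seqGapKernel_pow_apply_single (hn : 2 ≤ n) {β : ℝ} (hβ : 0 < β) {c : ℝ≥0∞}
    (hc : ∀ j, c ≤ ENNReal.ofReal (q j) * P j (Ici β)) {L : ℝ} {N : ℕ} (hN : L ≤ N * β) (t : ℕ)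
    (ht : t < n) {Δ : ZMod n → ℝ} (hΔ : Δ ∈ gapSimplex n L)
    (hzero : ∀ k : ℕ, t < k → k < n → Δ k = 0) :
    c ^ (t * N) ≤ (seqGapKernel n q P ^ (t * N)) Δ {Pi.single 0 L} := by
  induction t generalizing Δ with
  | zero =>
    rw [eq_single_of_mem_gapSimplex hΔ fun k hk => hzero k hk, zero_mul, pow_zero, pow_zero]
    change 1 ≤ Kernel.id _ _
    rw [Kernel.id_apply, Measure.dirac_apply_of_mem (mem_singleton _)]
  | succ t ih =>
    set j : ZMod n := ((t + 1 : ℕ) : ZMod n)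
    set Δ' := seqGapUpdate n j (Δ j) Δ with hΔ'def
    have hΔ' : Δ' ∈ gapSimplex n L := seqGapUpdate_mem_gapSimplex hn hΔ j (hΔ.1 j)
    have hzero' (k : ℕ) (hk : t < k) (hkn : k < n) : Δ' k = 0 := by
      rcases Nat.lt_or_eq_of_le hk with hk | rfl
      · have h₁ : (k : ZMod n) ≠ j - 1 := by
          rw [show j - 1 = t by simp [j]]
          exact (CharP.natCast_injOn_Iio (ZMod n) n).ne hkn (by simp; omega) (by omega)
        have h₂ : (k : ZMod n) ≠ j := (CharP.natCast_injOn_Iio (ZMod n) n).ne hkn ht (by omega)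
        rw [hΔ'def, seqGapUpdate_apply_of_ne h₁ h₂, hzero k hk hkn]
      · rw [hΔ'def, seqGapUpdate_apply_self hn, min_self, sub_self]
    have hΔj : Δ j ≤ N * β :=
      (Finset.single_le_sum (fun i _ => hΔ.1 i) (Finset.mem_univ j)).trans (hΔ.2.trans_le hN)
    calc c ^ ((t + 1) * N) = c ^ N * c ^ (t * N) := by ring
      _ ≤ (seqGapKernel n q P ^ N) Δ {Δ'} *
          (seqGapKernel n q P ^ (t * N)) Δ' {Pi.single 0 L} := by
        gcongr
        · exact pow_le_seqGapKernel_pow_apply_empty_gap hn hβ (hc j) N hΔ.1 hΔj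
        · exact ih (by omega) hΔ' hzero'
      _ ≤ (seqGapKernel n q P ^ ((t + 1) * N)) Δ {Pi.single 0 L} := by
        rw [add_mul, one_mul, add_comm]
        exact Kernel.pow_apply_singleton_mul_le _ _ _ _ _ (measurableSet_singleton _)

end Minorization

lemma measure_Ioi_pos_of_prod_pos {μ ν : Measure ℝ} [SFinite ν] (hν : ν (Iio 0) = 0)
    (h : 0 < (μ.prod ν) {p | p.2 < p.1}) : 0 < μ (Ioi 0) := by
  refine pos_iff_ne_zero.2 fun hμ => h.ne' (measure_mono_null (t := Ioi 0 ×ˢ univ ∪ univ ×ˢ Iio 0)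
    (fun p hp => ?_) (measure_union_null ?_ ?_))
  · by_cases hp₁ : 0 < p.1
    · exact Or.inl ⟨hp₁, trivial⟩
    · exact Or.inr ⟨trivial, lt_of_lt_of_le hp (not_lt.1 hp₁)⟩
  · simp [Measure.prod_prod, hμ]
  · simp [Measure.prod_prod, hν]

lemma exists_pos_forall_measure_Ici_pos {ι : Type*} [Finite ι] {P : ι → Measure ℝ}
    (hP : ∀ i, 0 < P i (Ioi 0)) : ∃ β > 0, ∀ i, 0 < P i (Ici β) := by
  have hmono : Monotone fun k : ℕ => Ici (1 / ((k : ℝ) + 1)) := fun a b hab =>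
    Ici_subset_Ici.2 (one_div_le_one_div_of_le (by positivity) (by gcongr))
  have hU : ⋃ k : ℕ, Ici (1 / ((k : ℝ) + 1)) = Ioi 0 := by
    ext x
    simp only [mem_iUnion, mem_Ici, mem_Ioi]
    refine ⟨fun ⟨k, hk⟩ => lt_of_lt_of_le (by positivity) hk, fun hx => ?_⟩
    obtain ⟨k, hk⟩ := exists_nat_one_div_lt hx
    exact ⟨k, hk.le⟩
  have hev (i : ι) : ∀ᶠ k : ℕ in atTop, 0 < P i (Ici (1 / ((k : ℝ) + 1))) :=
    (tendsto_measure_iUnion_atTop hmono).eventually (lt_mem_nhds (hU ▸ hP i))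
  obtain ⟨k, hk⟩ := (eventually_all.2 hev).exists
  exact ⟨_, by positivity, hk⟩

theorem seq_gap_kernel_unique_invariant_measure_general
    (n : ℕ) [NeZero n] (hn : 2 ≤ n)
    (L : ℝ) (hL : 0 < L)
    (q : ZMod n → ℝ) (hq : ∀ i, 0 < q i ∧ q i ≤ 1) (hqsum : ∑ i : ZMod n, q i = 1)
    (P : ZMod n → Measure ℝ) [∀ i, IsProbabilityMeasure (P i)]
    (hPsupp : ∀ i, P i (Set.Ici (0 : ℝ)) = 1)
    (hPgt : ∀ i j : ZMod n, i ≠ j →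
      0 < ((P i).prod (P j)) {p : ℝ × ℝ | p.2 < p.1}) :
    ∃! μ : Measure (ZMod n → ℝ),
      IsProbabilityMeasure μ ∧
      μ {Δ | (∀ i, 0 ≤ Δ i) ∧ ∑ i : ZMod n, Δ i = L} = 1 ∧
      ∀ A : Set (ZMod n → ℝ), MeasurableSet A →
        ∫⁻ Δ, ∑ j : ZMod n, ENNReal.ofReal (q j) *
          P j ((fun v => seqGapUpdate n j v Δ) ⁻¹' A) ∂μ = μ A := by
  have := isMarkovKernel_seqGapKernel (P := P) (fun j => (hq j).1.le) hqsum
  have hPneg (j : ZMod n) : P j (Iio 0) = 0 := by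
    rw [← compl_Ici, prob_compl_eq_zero_iff measurableSet_Ici, hPsupp]
  have hj (j : ZMod n) : j ≠ j + 1 := by
    have : Fact (1 < n) := ⟨hn⟩
    simp
  obtain ⟨β, hβ, hPβ⟩ := exists_pos_forall_measure_Ici_pos fun j =>
    measure_Ioi_pos_of_prod_pos (hPneg (j + 1)) (hPgt j (j + 1) (hj j))
  obtain ⟨j₀, hj₀⟩ := Finite.exists_min fun j => ENNReal.ofReal (q j) * P j (Ici β)
  obtain ⟨N, hN⟩ := exists_nat_ge (L / β)
  have hmin (Δ) (hΔ : Δ ∈ gapSimplex n L) :=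
    Measure.smul_dirac_le (pow_le_seqGapKernel_pow_apply_single hn hβ hj₀
      ((div_le_iff₀ hβ).1 hN) (n - 1) (by omega) hΔ fun k hk hkn => by omega)
  have hsingle : Pi.single 0 L ∈ gapSimplex n L :=
    ⟨fun i => by by_cases hi : i = 0 <;> simp [hi, hL.le], by simp⟩
  simpa only [seqGapKernel_invariant_iff, gapSimplex] using
    Kernel.existsUnique_invariant_of_forall_smul_le_pow (measurableSet_gapSimplex L)
    (seqGapKernel_apply_compl_gapSimplex hn hPneg) (by simp [hsingle])
    (ENNReal.pow_pos (ENNReal.mul_pos (ENNReal.ofReal_pos.2 (hq j₀).1).ne' (hPβ j₀).ne') _) hmin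

/-- **Theorem 1 of the paper, random sequential updating case.**  At each time
step a single particle `j` is chosen with probability `q_j` and jumps clockwise
by `min v (Δ_j)` with `v ∼ P_j`.  If the jump distributions `P_i` (supported on
`[0, ∞)`) satisfy the non-degeneracy condition `(P_i × P_j)({a > b}) > 0` for
all `i ≠ j`, then the random sequential updating gap kernel
`κ(Δ) = ∑_j q_j · (P_j).map (v ↦ F_{v,j} Δ)` on
`X_L = {Δ | ∀ i, 0 ≤ Δ i, ∑ i, Δ i = L}` has exactly one invariant probability
measure. -/
theorem seq_gap_kernel_unique_invariant_measure
    (n : ℕ) [NeZero n] (hn : 2 ≤ n)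
    (r : ZMod n → ℝ) (hr : ∀ i, 0 ≤ r i)
    (L : ℝ) (hLdef : L = 1 - 2 * ∑ i : ZMod n, r i) (hL : 0 < L)
    (q : ZMod n → ℝ) (hq : ∀ i, 0 < q i ∧ q i ≤ 1) (hqsum : ∑ i : ZMod n, q i = 1)
    (P : ZMod n → Measure ℝ) [∀ i, IsProbabilityMeasure (P i)]
    (hPsupp : ∀ i, P i (Set.Ici (0 : ℝ)) = 1)
    (hPgt : ∀ i j : ZMod n, i ≠ j →
      0 < ((P i).prod (P j)) {p : ℝ × ℝ | p.2 < p.1}) :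
    ∃! μ : Measure (ZMod n → ℝ),
      IsProbabilityMeasure μ ∧
      μ {Δ | (∀ i, 0 ≤ Δ i) ∧ ∑ i : ZMod n, Δ i = L} = 1 ∧
      ∀ A : Set (ZMod n → ℝ), MeasurableSet A →
        ∫⁻ Δ, ∑ j : ZMod n, ENNReal.ofReal (q j) *
          P j ((fun v => seqGapUpdate n j v Δ) ⁻¹' A) ∂μ = μ A :=
  seq_gap_kernel_unique_invariant_measure_general n hn L hL q hq hqsum P hPsupp hPgt
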